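/- arXiv:0907.0978 — 8 statements merged into one kernel-verified Lean document; each statement's English description precedes it below -/
import Mathlib

section
/- Let k be a field, G a group acting on the right transitively on a set X, x₀ ∈ X with stabilizer H = {g ∈ G | x₀ · g = x₀}, and z : G × G → (X → kˣ) a normalized 2-cocycle of G with values in F(X,kˣ). Let rep : X → G be a section with x₀ · rep(x) = x for all x ∈ X and rep(x₀) = e. For x ∈ X and g ∈ G set g̃(x,g) := rep(x) · g · (rep(x·g))⁻¹; then g̃(x,g) ∈ H. Let V be a k-vector space and ψ : H → GL(V) a map with ψ(e) = id_V and ψ(h₁h₂) = z(h₂⁻¹,h₁⁻¹)(x₀) · (ψ(h₁) ∘ ψ(h₂)) for all h₁,h₂ ∈ H. Define θ(x,g) := (z(g̃(x,g), rep(x·g))(x₀) / z(rep(x), g)(x₀)) · ψ(g̃(x,g)⁻¹) ∈ GL(V). Then: (a) θ(x,e) = id_V for all x ∈ X; (b) θ(x, g g') = z(g,g')(x) · (θ(x·g, g') ∘ θ(x,g)) for all x ∈ X and g,g' ∈ G; (c) θ(x₀, h⁻¹) = ψ(h) for all h ∈ H. -/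
/-!
The elements `g̃(x,g) = rep x * g * (rep (x·g))⁻¹` lie in the stabilizer of `x₀` and form a
cocycle: `g̃(x,gg') = g̃(x,g) * g̃(x·g,g')`. Writing `a = g̃(x,g)`, `b = g̃(x·g,g')`, the
projective representation gives `ψ((ab)⁻¹) = ψ(b⁻¹a⁻¹) = z(a,b)(x₀) · ψ(b⁻¹) ψ(a⁻¹)`, so (b)
reduces to an identity between scalars: the prefactors of `θ` convert `z(a,b)(x₀)` into
`z(g,g')(x)`, which takes three instances of the cocycle identity at `x₀`.
-/

section RightAction

variable {G X : Type*} [Group G] (act : X → G → X)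

theorem act_act_inv (hact_one : ∀ x, act x 1 = x)
    (hact_mul : ∀ x g g', act (act x g) g' = act x (g * g')) (x : X) (g : G) :
    act (act x g) g⁻¹ = x := by
  rw [hact_mul, mul_inv_cancel, hact_one]

theorem act_inv_eq_of_act_eq (hact_one : ∀ x, act x 1 = x)
    (hact_mul : ∀ x g g', act (act x g) g' = act x (g * g')) {x₀ : X} {h : G}
    (hh : act x₀ h = x₀) : act x₀ h⁻¹ = x₀ := by
  simpa only [hh] using act_act_inv act hact_one hact_mul x₀ h

variable (rep : X → G)

def transversalFactor (x : X) (g : G) : G := rep x * g * (rep (act x g))⁻¹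

theorem act_transversalFactor (hact_one : ∀ x, act x 1 = x)
    (hact_mul : ∀ x g g', act (act x g) g' = act x (g * g')) {x₀ : X}
    (hrep : ∀ x, act x₀ (rep x) = x) (x : X) (g : G) :
    act x₀ (transversalFactor act rep x g) = x₀ := by
  rw [transversalFactor, ← hact_mul, ← hact_mul, hrep]
  simpa only [hrep] using act_act_inv act hact_one hact_mul x₀ (rep (act x g))

theorem transversalFactor_one (hact_one : ∀ x, act x 1 = x) (x : X) :
    transversalFactor act rep x 1 = 1 := by
  rw [transversalFactor, hact_one, mul_one, mul_inv_cancel]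

theorem transversalFactor_mul (hact_mul : ∀ x g g', act (act x g) g' = act x (g * g'))
    (x : X) (g g' : G) :
    transversalFactor act rep x (g * g') =
      transversalFactor act rep x g * transversalFactor act rep (act x g) g' := by
  simp only [transversalFactor, hact_mul]
  group

theorem transversalFactor_of_act_eq {x₀ : X} (hrep₀ : rep x₀ = 1) {h : G}
    (hh : act x₀ h = x₀) : transversalFactor act rep x₀ h = h := by
  rw [transversalFactor, hh, hrep₀, one_mul, inv_one, mul_one]

end RightAction

section Scalar

variable {G X A : Type*} [Group G] [CommGroup A]
  (act : X → G → X) (rep : X → G) (x₀ : X) (z : G → G → X → A)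

def transversalScalar (x : X) (g : G) : A :=
  z (transversalFactor act rep x g) (rep (act x g)) x₀ / z (rep x) g x₀

theorem transversalScalar_one (hact_one : ∀ x, act x 1 = x)
    (hznorm : ∀ g : G, z g 1 = 1 ∧ z 1 g = 1) (x : X) :
    transversalScalar act rep x₀ z x 1 = 1 := by
  rw [transversalScalar, transversalFactor_one act rep hact_one, hact_one, (hznorm _).1,
    (hznorm _).2, Pi.one_apply, div_one]

theorem transversalScalar_of_act_eq (hrep₀ : rep x₀ = 1)
    (hznorm : ∀ g : G, z g 1 = 1 ∧ z 1 g = 1) {h : G} (hh : act x₀ h = x₀) :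
    transversalScalar act rep x₀ z x₀ h = 1 := by
  rw [transversalScalar, transversalFactor_of_act_eq act rep hrep₀ hh, hh, hrep₀, (hznorm _).1,
    (hznorm _).2, Pi.one_apply, div_one]

theorem transversalScalar_mul (hact_one : ∀ x, act x 1 = x)
    (hact_mul : ∀ x g g', act (act x g) g' = act x (g * g')) (hrep : ∀ x, act x₀ (rep x) = x)
    (hz : ∀ (g₁ g₂ g₃ : G) (x' : X),
      z g₂ g₃ (act x' g₁) * z g₁ (g₂ * g₃) x' = z (g₁ * g₂) g₃ x' * z g₁ g₂ x')
    (x : X) (g g' : G) :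
    transversalScalar act rep x₀ z x (g * g') *
        z (transversalFactor act rep x g) (transversalFactor act rep (act x g) g') x₀ =
      z g g' x * (transversalScalar act rep x₀ z (act x g) g' *
        transversalScalar act rep x₀ z x g) := by
  simp only [transversalScalar, transversalFactor_mul act rep hact_mul, ← hact_mul]
  set a := transversalFactor act rep x g with ha
  set b := transversalFactor act rep (act x g) g' with hb
  have ha₀ : act x₀ a = x₀ := act_transversalFactor act rep hact_one hact_mul hrep x g
  have hbr : b * rep (act (act x g) g') = rep (act x g) * g' := by
    rw [hb, transversalFactor]; group
  have har : a * rep (act x g) = rep x * g := by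
    rw [ha, transversalFactor]; group
  have E₁ := hz a b (rep (act (act x g) g')) x₀
  have E₂ := hz a (rep (act x g)) g' x₀
  have E₃ := hz (rep x) g g' x₀
  rw [ha₀, hbr] at E₁
  rw [ha₀, har] at E₂
  rw [hrep] at E₃
  apply Additive.ofMul.injective
  replace E₁ := congrArg Additive.ofMul E₁
  replace E₂ := congrArg Additive.ofMul E₂
  replace E₃ := congrArg Additive.ofMul E₃
  simp only [ofMul_mul, ofMul_div] at E₁ E₂ E₃ ⊢
  linear_combination (norm := abel) E₂ - E₁ - E₃

end Scalar

section Induced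

variable {G X A M : Type*} [Group G] [CommGroup A] [Monoid M]
  (act : X → G → X) (rep : X → G) (x₀ : X) (z : G → G → X → A)
  (c : A →* Mˣ) (ψ : G → Mˣ)

theorem map_mul_mul_map_mul_of_commute (hc : ∀ r u, Commute (c r) u) (s t : A) (u v : Mˣ) :
    c s * u * (c t * v) = c (s * t) * (u * v) := by
  rw [map_mul, mul_assoc, ← mul_assoc u, ← (hc t u).eq, mul_assoc, mul_assoc]

def inducedCocycle (x : X) (g : G) : Mˣ :=
  c (transversalScalar act rep x₀ z x g) * ψ (transversalFactor act rep x g)⁻¹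

theorem inducedCocycle_one (hact_one : ∀ x, act x 1 = x)
    (hznorm : ∀ g : G, z g 1 = 1 ∧ z 1 g = 1) (hψ_one : ψ 1 = 1) (x : X) :
    inducedCocycle act rep x₀ z c ψ x 1 = 1 := by
  rw [inducedCocycle, transversalScalar_one act rep x₀ z hact_one hznorm,
    transversalFactor_one act rep hact_one, inv_one, hψ_one, map_one, mul_one]

theorem inducedCocycle_inv_of_act_eq (hact_one : ∀ x, act x 1 = x)
    (hact_mul : ∀ x g g', act (act x g) g' = act x (g * g')) (hrep₀ : rep x₀ = 1)
    (hznorm : ∀ g : G, z g 1 = 1 ∧ z 1 g = 1) {h : G} (hh : act x₀ h = x₀) :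
    inducedCocycle act rep x₀ z c ψ x₀ h⁻¹ = ψ h := by
  have hh' := act_inv_eq_of_act_eq act hact_one hact_mul hh
  rw [inducedCocycle, transversalScalar_of_act_eq act rep x₀ z hrep₀ hznorm hh',
    transversalFactor_of_act_eq act rep hrep₀ hh', inv_inv, map_one, one_mul]

theorem inducedCocycle_mul (hact_one : ∀ x, act x 1 = x)
    (hact_mul : ∀ x g g', act (act x g) g' = act x (g * g')) (hrep : ∀ x, act x₀ (rep x) = x)
    (hz : ∀ (g₁ g₂ g₃ : G) (x' : X),
      z g₂ g₃ (act x' g₁) * z g₁ (g₂ * g₃) x' = z (g₁ * g₂) g₃ x' * z g₁ g₂ x')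
    (hc : ∀ r u, Commute (c r) u)
    (hψ_mul : ∀ h₁ h₂ : G, act x₀ h₁ = x₀ → act x₀ h₂ = x₀ →
      ψ (h₁ * h₂) = c (z h₂⁻¹ h₁⁻¹ x₀) * (ψ h₁ * ψ h₂))
    (x : X) (g g' : G) :
    inducedCocycle act rep x₀ z c ψ x (g * g') =
      c (z g g' x) * (inducedCocycle act rep x₀ z c ψ (act x g) g' *
        inducedCocycle act rep x₀ z c ψ x g) := by
  set a := transversalFactor act rep x g
  set b := transversalFactor act rep (act x g) g'
  have hstab : ∀ x g, act x₀ (transversalFactor act rep x g)⁻¹ = x₀ := fun x g =>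
    act_inv_eq_of_act_eq act hact_one hact_mul
      (act_transversalFactor act rep hact_one hact_mul hrep x g)
  have hψab : ψ (a * b)⁻¹ = c (z a b x₀) * (ψ b⁻¹ * ψ a⁻¹) := by
    simpa only [mul_inv_rev, inv_inv] using hψ_mul b⁻¹ a⁻¹ (hstab _ _) (hstab _ _)
  rw [inducedCocycle, transversalFactor_mul act rep hact_mul, hψab, ← mul_assoc, ← map_mul,
    transversalScalar_mul act rep x₀ z hact_one hact_mul hrep hz, inducedCocycle,
    inducedCocycle, map_mul_mul_map_mul_of_commute c hc, map_mul, mul_assoc]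

end Induced

theorem projective_rep_extends_to_equivariant_bundle_general
    {k G X V : Type*} [Field k] [Group G] [AddCommGroup V] [Module k V]
    (act : X → G → X)
    (hact_one : ∀ x, act x 1 = x)
    (hact_mul : ∀ x g g', act (act x g) g' = act x (g * g'))
    (x₀ : X)
    (z : G → G → X → kˣ)
    (hz : ∀ (g₁ g₂ g₃ : G) (x' : X),
      z g₂ g₃ (act x' g₁) * z g₁ (g₂ * g₃) x' = z (g₁ * g₂) g₃ x' * z g₁ g₂ x')
    (hznorm : ∀ g : G, z g 1 = 1 ∧ z 1 g = 1)
    (rep : X → G)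
    (hrep : ∀ x, act x₀ (rep x) = x)
    (hrep₀ : rep x₀ = 1)
    (gt : X → G → G)
    (hgt : ∀ x g, gt x g = rep x * g * (rep (act x g))⁻¹)
    (ψ : G → (Module.End k V)ˣ)
    (hψ_one : ψ 1 = 1)
    (hψ_mul : ∀ h₁ h₂ : G, act x₀ h₁ = x₀ → act x₀ h₂ = x₀ →
      ψ (h₁ * h₂) =
        Units.map (algebraMap k (Module.End k V)).toMonoidHom (z h₂⁻¹ h₁⁻¹ x₀) *
          (ψ h₁ * ψ h₂))
    (θ : X → G → (Module.End k V)ˣ)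
    (hθ : ∀ x g, θ x g =
      Units.map (algebraMap k (Module.End k V)).toMonoidHom
          (z (gt x g) (rep (act x g)) x₀ / z (rep x) g x₀) *
        ψ ((gt x g)⁻¹)) :
    -- `g̃(x,g)` lies in the stabilizer `H` of `x₀`
    (∀ (x : X) (g : G), act x₀ (gt x g) = x₀) ∧
    -- (a) `θ(x,e) = id`
    (∀ x : X, θ x 1 = 1) ∧
    -- (b) `θ(x,gg') = z(g,g')(x) · (θ(x·g,g') ∘ θ(x,g))`
    (∀ (x : X) (g g' : G),
      θ x (g * g') =
        Units.map (algebraMap k (Module.End k V)).toMonoidHom (z g g' x) *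
          (θ (act x g) g' * θ x g)) ∧
    -- (c) `θ(x₀,h⁻¹) = ψ(h)` for `h ∈ H`
    (∀ h : G, act x₀ h = x₀ → θ x₀ h⁻¹ = ψ h) := by
  set c := Units.map (algebraMap k (Module.End k V)).toMonoidHom
  have hc : ∀ r u, Commute (c r) u := fun r u =>
    Commute.units_val_iff.mp (Algebra.commute_algebraMap_left _ _)
  obtain rfl : gt = transversalFactor act rep := funext₂ hgt
  obtain rfl : θ = inducedCocycle act rep x₀ z c ψ := funext₂ hθ
  exact ⟨act_transversalFactor act rep hact_one hact_mul hrep,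
    inducedCocycle_one act rep x₀ z c ψ hact_one hznorm hψ_one,
    inducedCocycle_mul act rep x₀ z c ψ hact_one hact_mul hrep hz hc hψ_mul,
    fun _ hh => inducedCocycle_inv_of_act_eq act rep x₀ z c ψ hact_one hact_mul hrep₀ hznorm hh⟩

/-- Given a transitive right `G`-set `X`, a base point `x₀` with stabilizer `H`,
a normalized 2-cocycle `z` with values in `F(X,kˣ)`, a section `rep` of the action with
`rep x₀ = e`, the elements `g̃(x,g) = rep x * g * (rep (x·g))⁻¹` lie in `H`, and for any
projective representation `ψ` of `H` with central charge `ẑ_{x₀}`, the maps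
`θ(x,g) := (z(g̃(x,g), rep(x·g))(x₀) / z(rep x, g)(x₀)) · ψ(g̃(x,g)⁻¹)` satisfy
`θ(x,e) = id`, `θ(x,gg') = z(g,g')(x) · (θ(x·g,g') ∘ θ(x,g))` and `θ(x₀,h⁻¹) = ψ(h)`. -/
theorem projective_rep_extends_to_equivariant_bundle
    {k G X V : Type*} [Field k] [Group G] [AddCommGroup V] [Module k V]
    (act : X → G → X)
    (hact_one : ∀ x, act x 1 = x)
    (hact_mul : ∀ x g g', act (act x g) g' = act x (g * g'))
    (htrans : ∀ x y : X, ∃ g, act x g = y)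
    (x₀ : X)
    (z : G → G → X → kˣ)
    (hz : ∀ (g₁ g₂ g₃ : G) (x' : X),
      z g₂ g₃ (act x' g₁) * z g₁ (g₂ * g₃) x' = z (g₁ * g₂) g₃ x' * z g₁ g₂ x')
    (hznorm : ∀ g : G, z g 1 = 1 ∧ z 1 g = 1)
    (rep : X → G)
    (hrep : ∀ x, act x₀ (rep x) = x)
    (hrep₀ : rep x₀ = 1)
    (gt : X → G → G)
    (hgt : ∀ x g, gt x g = rep x * g * (rep (act x g))⁻¹)
    (ψ : G → (Module.End k V)ˣ)
    (hψ_one : ψ 1 = 1)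
    (hψ_mul : ∀ h₁ h₂ : G, act x₀ h₁ = x₀ → act x₀ h₂ = x₀ →
      ψ (h₁ * h₂) =
        Units.map (algebraMap k (Module.End k V)).toMonoidHom (z h₂⁻¹ h₁⁻¹ x₀) *
          (ψ h₁ * ψ h₂))
    (θ : X → G → (Module.End k V)ˣ)
    (hθ : ∀ x g, θ x g =
      Units.map (algebraMap k (Module.End k V)).toMonoidHom
          (z (gt x g) (rep (act x g)) x₀ / z (rep x) g x₀) *
        ψ ((gt x g)⁻¹)) :
    -- `g̃(x,g)` lies in the stabilizer `H` of `x₀`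
    (∀ (x : X) (g : G), act x₀ (gt x g) = x₀) ∧
    -- (a) `θ(x,e) = id`
    (∀ x : X, θ x 1 = 1) ∧
    -- (b) `θ(x,gg') = z(g,g')(x) · (θ(x·g,g') ∘ θ(x,g))`
    (∀ (x : X) (g g' : G),
      θ x (g * g') =
        Units.map (algebraMap k (Module.End k V)).toMonoidHom (z g g' x) *
          (θ (act x g) g' * θ x g)) ∧
    -- (c) `θ(x₀,h⁻¹) = ψ(h)` for `h ∈ H`
    (∀ h : G, act x₀ h = x₀ → θ x₀ h⁻¹ = ψ h) :=
  projective_rep_extends_to_equivariant_bundle_general act hact_one hact_mul x₀ z hz hznorm rep hrep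
    hrep₀ gt hgt ψ hψ_one hψ_mul θ hθ
end

section
/- Let k be a field, G a group acting on the right transitively on a set X, x₀ ∈ X with stabilizer H = {g ∈ G | x₀ · g = x₀}, and z : G × G → (X → kˣ) a 2-cocycle of G with values in F(X,kˣ). Let (E_x)_{x∈X} and (E'_x)_{x∈X} be families of k-vector spaces equipped with families of k-linear isomorphisms θ(x,g) : E_x → E_{x·g} and θ'(x,g) : E'_x → E'_{x·g} satisfying θ(x,e) = id and θ(x,gg') = z(g,g')(x) · (θ(x·g,g') ∘ θ(x,g)) for all x, g, g' (and likewise for θ'). Then: (a) if two families of k-linear maps (φ_x : E_x → E'_x)_{x∈X} and (φ̂_x : E_x → E'_x)_{x∈X} both satisfy the equivariance condition φ_{x·g} ∘ θ(x,g) = θ'(x,g) ∘ φ_x for all x ∈ X and g ∈ G, and if φ_{x₀} = φ̂_{x₀}, then φ_x = φ̂_x for all x ∈ X; (b) for every k-linear map f : E_{x₀} → E'_{x₀} satisfying f ∘ θ(x₀,h) = θ'(x₀,h) ∘ f for all h ∈ H, there exists a family (φ_x)_{x∈X} satisfying the equivariance condition with φ_{x₀} = f. -/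
/-- For `z`-projective `G`-equivariant vector bundles `(E,θ)`, `(E',θ')`
over a transitive right `G`-set `X` (fibers realized as submodules of ambient spaces
`W`, `W'`), (a) an equivariant morphism is determined by its component at `x₀`, and
(b) every `H`-equivariant linear map between the fibers at `x₀` (where `H` is the
stabilizer of `x₀`) extends to an equivariant morphism of bundles. -/
theorem equivariant_bundle_morphisms_from_fiber
    {k G X W W' : Type*} [Field k] [Group G]
    [AddCommGroup W] [Module k W] [AddCommGroup W'] [Module k W']
    (act : X → G → X)
    (hact_one : ∀ x, act x 1 = x)
    (hact_mul : ∀ x g g', act (act x g) g' = act x (g * g'))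
    (htrans : ∀ x y : X, ∃ g, act x g = y)
    (x₀ : X)
    (z : G → G → X → kˣ)
    (hz : ∀ (g₁ g₂ g₃ : G) (x' : X),
      z g₂ g₃ (act x' g₁) * z g₁ (g₂ * g₃) x' = z (g₁ * g₂) g₃ x' * z g₁ g₂ x')
    (E : X → Submodule k W) (E' : X → Submodule k W')
    (θ : ∀ (x : X) (g : G), E x ≃ₗ[k] E (act x g))
    (θ' : ∀ (x : X) (g : G), E' x ≃ₗ[k] E' (act x g))
    (hθ_one : ∀ (x : X) (v : E x), (θ x 1 v : W) = (v : W))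
    (hθ_mul : ∀ (x : X) (g g' : G) (v : E x),
      (θ x (g * g') v : W) = (z g g' x : k) • (θ (act x g) g' (θ x g v) : W))
    (hθ'_one : ∀ (x : X) (v : E' x), (θ' x 1 v : W') = (v : W'))
    (hθ'_mul : ∀ (x : X) (g g' : G) (v : E' x),
      (θ' x (g * g') v : W') = (z g g' x : k) • (θ' (act x g) g' (θ' x g v) : W')) :
    -- (a) equivariant morphisms agreeing at `x₀` agree everywhere
    (∀ φ φ' : ∀ x : X, E x →ₗ[k] E' x,
      (∀ (x : X) (g : G) (v : E x),
        (φ (act x g) (θ x g v) : W') = (θ' x g (φ x v) : W')) →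
      (∀ (x : X) (g : G) (v : E x),
        (φ' (act x g) (θ x g v) : W') = (θ' x g (φ' x v) : W')) →
      φ x₀ = φ' x₀ → ∀ x : X, φ x = φ' x) ∧
    -- (b) every `H`-equivariant map on the fiber at `x₀` extends to an
    -- equivariant morphism of bundles
    (∀ f : E x₀ →ₗ[k] E' x₀,
      (∀ h : G, act x₀ h = x₀ → ∀ (v w : E x₀), (w : W) = (θ x₀ h v : W) →
        (f w : W') = (θ' x₀ h (f v) : W')) →
      ∃ φ : ∀ x : X, E x →ₗ[k] E' x,
        (∀ (x : X) (g : G) (v : E x),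
          (φ (act x g) (θ x g v) : W') = (θ' x g (φ x v) : W')) ∧
        φ x₀ = f) := by
  classical
  have tθ : ∀ (x y : X), x = y → ∀ (g : G) (v : E x) (w : E y),
      (v : W) = (w : W) → ((θ x g v : W)) = ((θ y g w : W)) := by
    rintro x y rfl g v w hvw
    rw [Subtype.ext hvw]
  have tθ' : ∀ (x y : X), x = y → ∀ (g : G) (v : E' x) (w : E' y),
      (v : W') = (w : W') → ((θ' x g v : W')) = ((θ' y g w : W')) := by
    rintro x y rfl g v w hvw
    rw [Subtype.ext hvw]
  constructor
  · intro φ φ' hφ hφ' h0 x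
    obtain ⟨g, rfl⟩ := htrans x₀ x
    ext w
    have hw : θ x₀ g ((θ x₀ g).symm w) = w := (θ x₀ g).apply_symm_apply w
    have := hφ x₀ g ((θ x₀ g).symm w)
    rw [hw] at this
    have that := hφ' x₀ g ((θ x₀ g).symm w)
    rw [hw] at that
    rw [this, that, h0]
  · intro f hf
    choose σ0 hσ0 using htrans x₀
    set σ : X → G := Function.update σ0 x₀ 1 with hσdef
    have hσ : ∀ x, act x₀ (σ x) = x := by
      intro x
      by_cases hx : x = x₀
      · rw [hσdef, hx, Function.update_self]
        exact hact_one x₀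
      · simp only [hσdef, Function.update_of_ne hx]
        exact hσ0 x
    have hσ₀ : σ x₀ = 1 := Function.update_self _ _ _
    set Θ : ∀ x, E x₀ ≃ₗ[k] E x := fun x =>
      (θ x₀ (σ x)).trans (LinearEquiv.ofEq _ _ (congrArg E (hσ x))) with hΘdef
    set Θ' : ∀ x, E' x₀ ≃ₗ[k] E' x := fun x =>
      (θ' x₀ (σ x)).trans (LinearEquiv.ofEq _ _ (congrArg E' (hσ x))) with hΘ'def
    have hΘ : ∀ (x : X) (u : E x₀), (Θ x u : W) = (θ x₀ (σ x) u : W) := fun x u => rfl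
    have hΘ' : ∀ (x : X) (u : E' x₀), (Θ' x u : W') = (θ' x₀ (σ x) u : W') := fun x u => rfl
    set φ : ∀ x : X, E x →ₗ[k] E' x :=
      fun x => (Θ' x).toLinearMap ∘ₗ f ∘ₗ ((Θ x).symm.toLinearMap) with hφdef
    have hφ : ∀ (x : X) (v : E x),
        (φ x v : W') = (θ' x₀ (σ x) (f ((Θ x).symm v)) : W') := fun x v => rfl
    refine ⟨φ, ?_, ?_⟩
    · intro x g v
      set a := σ x with ha
      set b := σ (act x g) with hb
      set u := (Θ x).symm v with hudef
      have hu : (θ x₀ a u : W) = (v : W) := by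
        have h1 := (Θ x).apply_symm_apply v
        calc (θ x₀ a u : W) = (Θ x u : W) := rfl
          _ = (v : W) := by rw [h1]
      set h := a * g * b⁻¹ with hhdef
      have hhb : h * b = a * g := by
        simp only [hhdef]; group
      have hh : act x₀ h = x₀ := by
        have h1 : act x₀ (a * g) = act x₀ b := by
          rw [← hact_mul, hσ x, hσ (act x g)]
        rw [hhdef, ← hact_mul, h1, hact_mul]
        simp only [mul_inv_cancel]
        exact hact_one x₀
      have memtrans : ∀ y : X, y = x₀ → ∀ m : W, m ∈ E y → m ∈ E x₀ := by
        rintro y rfl m hm; exact hm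
      have memw : (θ x₀ h u : W) ∈ E x₀ :=
        memtrans (act x₀ h) hh _ (SetLike.coe_mem _)
      set w : E x₀ := ⟨(θ x₀ h u : W), memw⟩ with hwdef
      have hw : (w : W) = (θ x₀ h u : W) := rfl
      have hfw : (f w : W') = (θ' x₀ h (f u) : W') := hf h hh u w hw
      set u' := (Θ (act x g)).symm (θ x g v) with hu'def
      have hu' : (θ x₀ b u' : W) = (θ x g v : W) := by
        have h1 := (Θ (act x g)).apply_symm_apply (θ x g v)
        calc (θ x₀ b u' : W) = (Θ (act x g) u' : W) := rfl
          _ = _ := by rw [h1]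
      set ζ : k := (z a g x₀ : k) with hζdef
      set η : k := (z h b x₀ : k) with hηdef
      have key : ζ • u' = η • w := by
        apply (θ x₀ b).injective
        apply Subtype.ext
        have e1 : (θ x₀ b (ζ • u') : W) = ζ • (θ x₀ b u' : W) := by
          rw [map_smul]; rfl
        have e2 : (θ x₀ b (η • w) : W) = η • (θ x₀ b w : W) := by
          rw [map_smul]; rfl
        have e3 : (θ (act x₀ a) g (θ x₀ a u) : W) = (θ x g v : W) :=
          tθ (act x₀ a) x (hσ x) g (θ x₀ a u) v hu
        have e4 : (θ x₀ (a * g) u : W) = ζ • (θ (act x₀ a) g (θ x₀ a u) : W) :=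
          hθ_mul x₀ a g u
        have e5 : (θ x₀ (h * b) u : W) = η • (θ (act x₀ h) b (θ x₀ h u) : W) :=
          hθ_mul x₀ h b u
        have e6 : (θ (act x₀ h) b (θ x₀ h u) : W) = (θ x₀ b w : W) :=
          tθ (act x₀ h) x₀ hh b (θ x₀ h u) w hw.symm
        rw [e1, e2, hu', ← e3, ← e4, ← e6, ← e5, hhb]
      have keyf : ζ • f u' = η • f w := by
        rw [← map_smul, key, map_smul]
      have e6' : (θ' (act x₀ h) b (θ' x₀ h (f u)) : W') = (θ' x₀ b (f w) : W') :=
        tθ' (act x₀ h) x₀ hh b (θ' x₀ h (f u)) (f w) hfw.symm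
      have e3' : (θ' (act x₀ a) g (θ' x₀ a (f u)) : W') = (θ' x g (φ x v) : W') :=
        tθ' (act x₀ a) x (hσ x) g (θ' x₀ a (f u)) (φ x v) (hφ x v).symm
      refine ((z a g x₀).isUnit.smul_left_cancel).mp ?_
      have hL : (φ (act x g) (θ x g v) : W') = (θ' x₀ b (f u') : W') := hφ (act x g) (θ x g v)
      calc ζ • (φ (act x g) (θ x g v) : W')
          = ζ • (θ' x₀ b (f u') : W') := by rw [hL]
        _ = (θ' x₀ b (ζ • f u') : W') := by rw [map_smul]; rfl
        _ = (θ' x₀ b (η • f w) : W') := by rw [keyf]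
        _ = η • (θ' x₀ b (f w) : W') := by rw [map_smul]; rfl
        _ = η • (θ' (act x₀ h) b (θ' x₀ h (f u)) : W') := by rw [e6']
        _ = (θ' x₀ (h * b) (f u) : W') := (hθ'_mul x₀ h b (f u)).symm
        _ = (θ' x₀ (a * g) (f u) : W') := by rw [hhb]
        _ = ζ • (θ' (act x₀ a) g (θ' x₀ a (f u)) : W') := hθ'_mul x₀ a g (f u)
        _ = ζ • (θ' x g (φ x v) : W') := by rw [e3']
    · ext v
      have hΘid : ∀ v : E x₀, Θ x₀ v = v := by
        intro v
        apply Subtype.ext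
        have : (Θ x₀ v : W) = (θ x₀ (σ x₀) v : W) := rfl
        rw [this, hσ₀]
        exact hθ_one x₀ v
      have hsymm : (Θ x₀).symm v = v := by
        have h1 := (Θ x₀).symm_apply_apply v
        rw [hΘid v] at h1
        exact h1
      have h2 : (φ x₀ v : W') = (θ' x₀ (σ x₀) (f ((Θ x₀).symm v)) : W') := hφ x₀ v
      rw [h2, hsymm, hσ₀]
      exact hθ'_one x₀ (f v)
end

section
/- Let k be a field, G a group, and A an abelian group (written additively) with a left G-action by group automorphisms. Let I := Hom(A,kˣ) × G be an index set, and let G act on the right on tuples λ ∈ (kˣ)^I by (λ · g)_{(χ,h)} := λ_{(χ, h g)} (equivalently, G acts on the left by (g·λ)_{(χ,h)} = λ_{(χ,hg)}). Define β_R : A → (kˣ)^I by β_R(u)_{(χ,h)} := χ(h·u). Then: (a) β_R is a group homomorphism and is G-equivariant, i.e. β_R(g·u) = g·β_R(u) for all g ∈ G, u ∈ A; (b) if α : G × G × G → A is a normalized 3-cocycle, i.e. g₁·α(g₂,g₃,g₄) − α(g₁g₂,g₃,g₄) + α(g₁,g₂g₃,g₄) − α(g₁,g₂,g₃g₄) +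 α(g₁,g₂,g₃) = 0 for all g₁,g₂,g₃,g₄ ∈ G and α(g₁,g₂,g₃) = 0 whenever one of the arguments equals e, then the 2-cochain c_R : G × G → (kˣ)^I defined by c_R(g₁,g₂)_{(χ,h)} := χ(α(h,g₁,g₂)) is normalized and satisfies ∂c_R = β_R ∘ α, i.e. χ(α(hg₁,g₂,g₃)) · χ(α(h,g₁,g₂g₃)) · χ(α(h,g₁g₂,g₃))⁻¹ · χ(α(h,g₁,g₂))⁻¹ = χ(h·α(g₁,g₂,g₃)) for all g₁,g₂,g₃,h ∈ G and all homomorphisms χ : A → kˣ. -/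
/-! Everything is pointwise in the index `(χ, h)`: a character `χ` turns sums in `A` into
products in `kˣ`, so (a) is `χ((h * g) • u) = χ(h • (g • u))` and additivity of `h • -`,
normalization of `c_R` is normalization of `α`, and `∂c_R = β_R ∘ α` is the image under `χ`
of the cocycle identity for `α` evaluated at `(h, g₁, g₂, g₃)`. -/

theorem smul_eq_of_isCocycle₃ {G A : Type*} [Mul G] [AddCommGroup A] [SMul G A]
    {α : G → G → G → A}
    (hα : ∀ g₁ g₂ g₃ g₄ : G,
      g₁ • α g₂ g₃ g₄ - α (g₁ * g₂) g₃ g₄ + α g₁ (g₂ * g₃) g₄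
        - α g₁ g₂ (g₃ * g₄) + α g₁ g₂ g₃ = 0)
    (h g₁ g₂ g₃ : G) :
    h • α g₁ g₂ g₃
      = α (h * g₁) g₂ g₃ + α h g₁ (g₂ * g₃) - α h (g₁ * g₂) g₃ - α h g₁ g₂ := by
  rw [← sub_eq_zero, ← hα h g₁ g₂ g₃]
  abel

/-- classification data of the regular representation: with
`I = Hom(A,kˣ) × G`, the map `β_R(u)_{(χ,h)} = χ(h·u)` is a `G`-equivariant group
homomorphism `A → (kˣ)^I`, and for any normalized 3-cocycle `α` of `G` with values in
`A`, the 2-cochain `c_R(g₁,g₂)_{(χ,h)} = χ(α(h,g₁,g₂))` is normalized and satisfies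
`∂c_R = β_R ∘ α`. -/
theorem regular_representation_classifying_data
    {k G A : Type*} [Field k] [Group G] [AddCommGroup A] [DistribMulAction G A]
    (βR : A → ((A →+ Additive kˣ) × G) → kˣ)
    (hβR : ∀ (u : A) (χ : A →+ Additive kˣ) (h : G),
      βR u (χ, h) = Additive.toMul (χ (h • u))) :
    -- (a) `β_R` is a group homomorphism
    ((∀ u v : A, βR (u + v) = βR u * βR v) ∧
      -- and it is `G`-equivariant: `β_R(g·u) = g·β_R(u)` with `(g·λ)_{(χ,h)} = λ_{(χ,hg)}`
      (∀ (g : G) (u : A) (χ : A →+ Additive kˣ) (h : G),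
        βR (g • u) (χ, h) = βR u (χ, h * g))) ∧
    -- (b) for a normalized 3-cocycle `α`, `c_R` is normalized and `∂c_R = β_R ∘ α`
    (∀ α : G → G → G → A,
      (∀ g₁ g₂ g₃ g₄ : G,
        g₁ • α g₂ g₃ g₄ - α (g₁ * g₂) g₃ g₄ + α g₁ (g₂ * g₃) g₄
          - α g₁ g₂ (g₃ * g₄) + α g₁ g₂ g₃ = 0) →
      (∀ g₁ g₂ g₃ : G, α 1 g₂ g₃ = 0 ∧ α g₁ 1 g₃ = 0 ∧ α g₁ g₂ 1 = 0) →
      ∀ cR : G → G → ((A →+ Additive kˣ) × G) → kˣ,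
        (∀ (g₁ g₂ : G) (χ : A →+ Additive kˣ) (h : G),
          cR g₁ g₂ (χ, h) = Additive.toMul (χ (α h g₁ g₂))) →
        -- `c_R` is normalized
        ((∀ g : G, cR g 1 = 1 ∧ cR 1 g = 1) ∧
        -- `∂c_R = β_R ∘ α`
        (∀ (g₁ g₂ g₃ h : G) (χ : A →+ Additive kˣ),
          Additive.toMul (χ (α (h * g₁) g₂ g₃)) * Additive.toMul (χ (α h g₁ (g₂ * g₃)))
              * (Additive.toMul (χ (α h (g₁ * g₂) g₃)))⁻¹
              * (Additive.toMul (χ (α h g₁ g₂)))⁻¹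
            = Additive.toMul (χ (h • α g₁ g₂ g₃))))) := by
  refine ⟨⟨fun u v => ?_, fun g u χ h => by rw [hβR, hβR, mul_smul]⟩,
    fun α hα hα₀ cR hcR => ⟨fun g => ⟨?_, ?_⟩, fun g₁ g₂ g₃ h χ => ?_⟩⟩
  · funext ⟨χ, h⟩
    simp only [Pi.mul_apply, hβR, smul_add, map_add, toMul_add]
  · funext ⟨χ, h⟩
    rw [hcR, (hα₀ h g 1).2.2, map_zero, toMul_zero, Pi.one_apply]
  · funext ⟨χ, h⟩
    rw [hcR, (hα₀ h 1 g).2.1, map_zero, toMul_zero, Pi.one_apply]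
  · simp only [smul_eq_of_isCocycle₃ hα, map_sub, map_add, toMul_sub, toMul_add,
      div_eq_mul_inv]
end

section
/- Let k be a field, G a group, A an abelian group (written additively) with a left G-action by automorphisms, and α : G × G × G → A a 3-cocycle, i.e. g₁·α(g₂,g₃,g₄) − α(g₁g₂,g₃,g₄) + α(g₁,g₂g₃,g₄) − α(g₁,g₂,g₃g₄) + α(g₁,g₂,g₃) = 0 for all g₁,g₂,g₃,g₄ ∈ G. Let n, n' ≥ 1, let ρ : G → S_n and ρ' : G → S_{n'} be group homomorphisms, and let G act on the right on X := {1,…,n'} × {1,…,n} by (i',i)·g := (ρ'(g⁻¹)(i'), ρ(g⁻¹)(i)). Let β : A → (kˣ)ⁿ and β' : A → (kˣ)^{n'} be G-equivariant group homomorphisms (with coordinate-permuting actions (g·λ)_i = λ_{ρ(g⁻¹)(i)} and (g·λ')_{i'} = λ'_{ρ'(g⁻¹)(i')}), and let c : G × G → (kˣ)ⁿ and c' : G × G → (kˣ)^{n'} be 2-cochains with ∂c = β∘α and ∂c' = β'∘α, i.e. c(g₂,g₃)_{ρ(g₁⁻¹)(i)} · c(g₁,g₂g₃)_i · c(g₁g₂,g₃)_i⁻¹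 · c(g₁,g₂)_i⁻¹ = β(α(g₁,g₂,g₃))_i for all g₁,g₂,g₃ and i (and likewise for c', β', ρ'). Suppose X_λ ⊆ X is a G-invariant subset such that the component homomorphisms satisfy β_i = β'_{i'} (as homomorphisms A → kˣ) for all (i',i) ∈ X_λ. Then z_λ(g₁,g₂)(i',i) := c'(g₁,g₂)_{i'} · (c(g₁,g₂)_i)⁻¹ defines a 2-cocycle of G with values in F(X_λ,kˣ), i.e. z_λ(g₂,g₃)((i',i)·g₁) · z_λ(g₁,g₂g₃)(i',i) = z_λ(g₁g₂,g₃)(i',i) · z_λ(g₁,g₂)(i',i) for all g₁,g₂,g₃ ∈ G and (i',i) ∈ X_λ. Moreover z_λ is normalized if c and c' are normalized. -/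
/-! Both `c` and `c'` have coboundary `β ∘ α` resp. `β' ∘ α`, and at a point `(i', i)` of `X_λ`
the components `β_i` and `β'_{i'}` coincide, so the coboundaries of `c` at `i` and of `c'` at `i'`
agree; in an abelian group the quotient of two cochains with equal coboundaries is a cocycle. -/

theorem mul_inv_mul_mul_inv_eq_of_mul_mul_inv_mul_inv_eq {M : Type*} [CommGroup M]
    {a₁ a₂ b₁ b₂ a₁' a₂' b₁' b₂' : M}
    (h : a₁ * a₂ * b₁⁻¹ * b₂⁻¹ = a₁' * a₂' * b₁'⁻¹ * b₂'⁻¹) :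
    a₁' * a₁⁻¹ * (a₂' * a₂⁻¹) = b₁' * b₁⁻¹ * (b₂' * b₂⁻¹) := by
  rw [← mul_inv_eq_one] at h ⊢
  rw [← inv_eq_one, ← h]
  simp only [mul_inv, inv_inv]
  ac_rfl

theorem intertwining_orbit_cocycle_general
    {k G A : Type*} [Field k] [Group G]
    (α : G → G → G → A)
    (n n' : ℕ)
    (ρ : G →* Equiv.Perm (Fin n)) (ρ' : G →* Equiv.Perm (Fin n'))
    (β : A → Fin n → kˣ) (β' : A → Fin n' → kˣ)
    (c : G → G → Fin n → kˣ) (c' : G → G → Fin n' → kˣ)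
    (hc : ∀ (g₁ g₂ g₃ : G) (i : Fin n),
      c g₂ g₃ (ρ g₁⁻¹ i) * c g₁ (g₂ * g₃) i * (c (g₁ * g₂) g₃ i)⁻¹ * (c g₁ g₂ i)⁻¹
        = β (α g₁ g₂ g₃) i)
    (hc' : ∀ (g₁ g₂ g₃ : G) (i' : Fin n'),
      c' g₂ g₃ (ρ' g₁⁻¹ i') * c' g₁ (g₂ * g₃) i' * (c' (g₁ * g₂) g₃ i')⁻¹ * (c' g₁ g₂ i')⁻¹
        = β' (α g₁ g₂ g₃) i')
    (Xlam : Set (Fin n' × Fin n))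
    (hX_int : ∀ p ∈ Xlam, ∀ u : A, β u p.2 = β' u p.1) :
    -- `z_λ` is a 2-cocycle of `G` with values in `F(X_λ,kˣ)`
    (∀ (g₁ g₂ g₃ : G), ∀ p ∈ Xlam,
      (c' g₂ g₃ (ρ' g₁⁻¹ p.1) * (c g₂ g₃ (ρ g₁⁻¹ p.2))⁻¹)
          * (c' g₁ (g₂ * g₃) p.1 * (c g₁ (g₂ * g₃) p.2)⁻¹)
        = (c' (g₁ * g₂) g₃ p.1 * (c (g₁ * g₂) g₃ p.2)⁻¹)
            * (c' g₁ g₂ p.1 * (c g₁ g₂ p.2)⁻¹)) ∧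
    -- `z_λ` is normalized whenever `c` and `c'` are normalized
    ((∀ (g : G) (i : Fin n), c g 1 i = 1 ∧ c 1 g i = 1) →
      (∀ (g : G) (i' : Fin n'), c' g 1 i' = 1 ∧ c' 1 g i' = 1) →
      ∀ (g : G), ∀ p ∈ Xlam,
        c' g 1 p.1 * (c g 1 p.2)⁻¹ = 1 ∧ c' 1 g p.1 * (c 1 g p.2)⁻¹ = 1) := by
  refine ⟨fun g₁ g₂ g₃ p hp => ?_, fun hcn hcn' g p _ => ?_⟩
  · apply mul_inv_mul_mul_inv_eq_of_mul_mul_inv_mul_inv_eq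
    rw [hc, hc', hX_int p hp]
  · simp [hcn g p.2, hcn' g p.1]

/-- given classification data `(n,ρ,β,c)` and `(n',ρ',β',c')` with
`∂c = β∘α` and `∂c' = β'∘α`, and a `G`-invariant subset `X_λ` of `[n'] × [n]` on which
`β_i = β'_{i'}`, the function `z_λ(g₁,g₂)(i',i) = c'(g₁,g₂)_{i'} · c(g₁,g₂)_i⁻¹` is a
2-cocycle of `G` with values in `F(X_λ,kˣ)`, normalized whenever `c` and `c'` are. -/
theorem intertwining_orbit_cocycle
    {k G A : Type*} [Field k] [Group G] [AddCommGroup A] [DistribMulAction G A]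
    (α : G → G → G → A)
    (hα : ∀ g₁ g₂ g₃ g₄ : G,
      g₁ • α g₂ g₃ g₄ - α (g₁ * g₂) g₃ g₄ + α g₁ (g₂ * g₃) g₄
        - α g₁ g₂ (g₃ * g₄) + α g₁ g₂ g₃ = 0)
    (n n' : ℕ) (hn : 1 ≤ n) (hn' : 1 ≤ n')
    (ρ : G →* Equiv.Perm (Fin n)) (ρ' : G →* Equiv.Perm (Fin n'))
    (β : A → Fin n → kˣ) (β' : A → Fin n' → kˣ)
    (hβ_hom : ∀ u v : A, β (u + v) = β u * β v)
    (hβ'_hom : ∀ u v : A, β' (u + v) = β' u * β' v)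
    (hβ_eq : ∀ (g : G) (u : A) (i : Fin n), β (g • u) i = β u (ρ g⁻¹ i))
    (hβ'_eq : ∀ (g : G) (u : A) (i' : Fin n'), β' (g • u) i' = β' u (ρ' g⁻¹ i'))
    (c : G → G → Fin n → kˣ) (c' : G → G → Fin n' → kˣ)
    (hc : ∀ (g₁ g₂ g₃ : G) (i : Fin n),
      c g₂ g₃ (ρ g₁⁻¹ i) * c g₁ (g₂ * g₃) i * (c (g₁ * g₂) g₃ i)⁻¹ * (c g₁ g₂ i)⁻¹
        = β (α g₁ g₂ g₃) i)
    (hc' : ∀ (g₁ g₂ g₃ : G) (i' : Fin n'),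
      c' g₂ g₃ (ρ' g₁⁻¹ i') * c' g₁ (g₂ * g₃) i' * (c' (g₁ * g₂) g₃ i')⁻¹ * (c' g₁ g₂ i')⁻¹
        = β' (α g₁ g₂ g₃) i')
    (Xlam : Set (Fin n' × Fin n))
    (hX_inv : ∀ p ∈ Xlam, ∀ g : G, (ρ' g⁻¹ p.1, ρ g⁻¹ p.2) ∈ Xlam)
    (hX_int : ∀ p ∈ Xlam, ∀ u : A, β u p.2 = β' u p.1) :
    -- `z_λ` is a 2-cocycle of `G` with values in `F(X_λ,kˣ)`
    (∀ (g₁ g₂ g₃ : G), ∀ p ∈ Xlam,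
      (c' g₂ g₃ (ρ' g₁⁻¹ p.1) * (c g₂ g₃ (ρ g₁⁻¹ p.2))⁻¹)
          * (c' g₁ (g₂ * g₃) p.1 * (c g₁ (g₂ * g₃) p.2)⁻¹)
        = (c' (g₁ * g₂) g₃ p.1 * (c (g₁ * g₂) g₃ p.2)⁻¹)
            * (c' g₁ g₂ p.1 * (c g₁ g₂ p.2)⁻¹)) ∧
    -- `z_λ` is normalized whenever `c` and `c'` are normalized
    ((∀ (g : G) (i : Fin n), c g 1 i = 1 ∧ c 1 g i = 1) →
      (∀ (g : G) (i' : Fin n'), c' g 1 i' = 1 ∧ c' 1 g i' = 1) →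
      ∀ (g : G), ∀ p ∈ Xlam,
        c' g 1 p.1 * (c g 1 p.2)⁻¹ = 1 ∧ c' 1 g p.1 * (c 1 g p.2)⁻¹ = 1) :=
  intertwining_orbit_cocycle_general α n n' ρ ρ' β β' c c' hc hc' Xlam hX_int
end

section
/- Let k be an algebraically closed field of characteristic zero, G a finite group, and z : G × G → kˣ a normalized 2-cocycle with trivial action, i.e. z(g₂,g₃) · z(g₁,g₂g₃) = z(g₁g₂,g₃) · z(g₁,g₂) for all g₁,g₂,g₃ ∈ G and z(g,e) = z(e,g) = 1 for all g ∈ G. Let A be an associative unital k-algebra equipped with a k-basis (e_g)_{g∈G} indexed by G such that e_g · e_{g'} = z(g,g') · e_{g g'} for all g, g' ∈ G (a twisted group algebra k[G]_z). Then the dimension over k of the center Z(A) of A equals the number of z-regular conjugacy classes of G. -/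
/-!
An element `x = ∑ x_g e_g` is central iff it commutes with every `e_a`, i.e. iff
`x_{a g a⁻¹} = c(a, g) x_g` with `c(a, g) = z(a, g) / z(a g a⁻¹, a)`; the 2-cocycle identity for
`z` makes `c` a 1-cocycle for the conjugation action of `G` on itself. For a 1-cocycle `c` of any
action on a finite set, such twisted-invariant functions vanish on every orbit on which `c` is
nontrivial somewhere on a stabilizer, and are freely determined by one value on each other orbit.
For conjugation the stabilizer of `g` is its centralizer, on which `c(h, g) = z(h, g) / z(g, h)`,
so the remaining orbits are exactly the `z`-regular classes.
-/

open Module MulAction ConjAct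

namespace MulAction.orbitRel.Quotient

variable {G X : Type*} [Group G] [MulAction G X]

lemma out_mem_orbit (ω : orbitRel.Quotient G X) : ω.out ∈ ω.orbit :=
  mem_orbit.mpr ω.out_eq'

lemma mem_orbit_mk (x : X) : x ∈ orbit (Quotient.mk'' x : orbitRel.Quotient G X) :=
  mem_orbit.mpr rfl

lemma mem_orbit_of_mem_of_mem {ω : orbitRel.Quotient G X} {x y : X}
    (hx : x ∈ ω.orbit) (hy : y ∈ ω.orbit) : y ∈ MulAction.orbit G x := by
  rw [orbit_eq_orbit_out ω Quotient.out_eq'] at hx hy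
  rw [← orbit_eq_iff] at hx
  rwa [hx]

lemma exists_smul_out_mk_eq (x : X) :
    ∃ a : G, a • (Quotient.mk'' x : orbitRel.Quotient G X).out = x :=
  mem_orbit_of_mem_of_mem (out_mem_orbit _) (mem_orbit_mk x)

end MulAction.orbitRel.Quotient

open MulAction.orbitRel.Quotient

lemma cocycle_eq_of_smul_eq {G X M : Type*} [Group G] [MulAction G X] [Monoid M]
    {F : G → X → M} (hF : ∀ (a b : G) (x : X), F (a * b) x = F a (b • x) * F b x)
    {x : X} (hx : ∀ a : G, a • x = x → F a x = 1) {b c : G} (h : b • x = c • x) :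
    F b x = F c x := by
  have hstab : (b⁻¹ * c) • x = x := by rw [mul_smul, ← h, inv_smul_smul]
  calc F b x = F b ((b⁻¹ * c) • x) * F (b⁻¹ * c) x := by rw [hstab, hx _ hstab, mul_one]
    _ = F c x := by rw [← hF, mul_inv_cancel_left]

section TwistedInvariants

variable {G X k : Type*} [Group G] [MulAction G X]

def twistedInvariants [CommSemiring k] (F : G → X → kˣ) : Submodule k (X → k) where
  carrier := {f | ∀ (a : G) (x : X), f (a • x) = F a x * f x}
  add_mem' hf hg a x := by simp [hf a x, hg a x, mul_add]
  zero_mem' := by simp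
  smul_mem' c f hf a x := by simp [hf a x, mul_left_comm]

lemma mem_twistedInvariants [CommSemiring k] {F : G → X → kˣ} {f : X → k} :
    f ∈ twistedInvariants F ↔ ∀ (a : G) (x : X), f (a • x) = F a x * f x :=
  Iff.rfl

def untwistedOrbits {M : Type*} [One M] (F : G → X → M) : Set (orbitRel.Quotient G X) :=
  {ω | ∀ x ∈ ω.orbit, ∀ a : G, a • x = x → F a x = 1}

lemma apply_eq_zero_of_mem_orbit [CommSemiring k] {F : G → X → kˣ} {f : X → k}
    (hf : f ∈ twistedInvariants F) {x y : X} (hx : f x = 0) (hy : y ∈ orbit G x) : f y = 0 := by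
  obtain ⟨a, rfl⟩ := hy
  rw [hf a x, hx, mul_zero]

lemma apply_eq_zero_of_smul_eq [CommRing k] [IsDomain k] {F : G → X → kˣ} {f : X → k}
    (hf : f ∈ twistedInvariants F) {a : G} {x : X} (ha : a • x = x) (hFa : F a x ≠ 1) :
    f x = 0 := by
  have h := hf a x
  rw [ha] at h
  by_contra hx
  exact hFa (Units.ext (mul_right_cancel₀ hx (h.symm.trans (one_mul _).symm)))

noncomputable def evalAtOrbitReps [CommSemiring k] (F : G → X → kˣ) :
    twistedInvariants F →ₗ[k] (untwistedOrbits F → k) :=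
  LinearMap.pi fun ω => (LinearMap.proj (ω : orbitRel.Quotient G X).out).comp
    (twistedInvariants F).subtype

lemma evalAtOrbitReps_injective [CommRing k] [IsDomain k] {F : G → X → kˣ} :
    Function.Injective (evalAtOrbitReps F) := by
  rw [← LinearMap.ker_eq_bot, LinearMap.ker_eq_bot']
  rintro ⟨f, hf⟩ h0
  ext x
  set ω : orbitRel.Quotient G X := Quotient.mk'' x
  by_cases hω : ω ∈ untwistedOrbits F
  · exact apply_eq_zero_of_mem_orbit hf (congrFun h0 ⟨ω, hω⟩)
      (mem_orbit_of_mem_of_mem (out_mem_orbit ω) (mem_orbit_mk x))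
  · obtain ⟨y, hy, a, ha, hFa⟩ : ∃ y ∈ ω.orbit, ∃ a : G, a • y = y ∧ F a y ≠ 1 := by
      simpa [untwistedOrbits] using hω
    exact apply_eq_zero_of_mem_orbit hf (apply_eq_zero_of_smul_eq hf ha hFa)
      (mem_orbit_of_mem_of_mem hy (mem_orbit_mk x))

lemma evalAtOrbitReps_surjective [CommSemiring k] {F : G → X → kˣ}
    (hF : ∀ (a b : G) (x : X), F (a * b) x = F a (b • x) * F b x) :
    Function.Surjective (evalAtOrbitReps F) := by
  classical
  intro v
  choose t ht using exists_smul_out_mk_eq (G := G) (X := X)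
  let w : orbitRel.Quotient G X → k := fun ω => if hω : ω ∈ untwistedOrbits F then v ⟨ω, hω⟩ else 0
  -- twisted invariance forces `f (t • ω.out) = F t ω.out * f ω.out`
  let f : X → k := fun x =>
    F (t x) (Quotient.mk'' x : orbitRel.Quotient G X).out * w (Quotient.mk'' x)
  have hf : f ∈ twistedInvariants F := by
    intro a x
    have hmk : (Quotient.mk'' (a • x) : orbitRel.Quotient G X) = Quotient.mk'' x :=
      quotient_smul_eq
    have hax := ht (a • x)
    simp only [f, hmk] at hax ⊢
    set ω : orbitRel.Quotient G X := Quotient.mk'' x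
    by_cases hω : ω ∈ untwistedOrbits F
    · have key : F (t (a • x)) ω.out = F a x * F (t x) ω.out :=
        calc F (t (a • x)) ω.out = F (a * t x) ω.out :=
              cocycle_eq_of_smul_eq hF (hω _ (out_mem_orbit ω)) (by rw [hax, mul_smul, ht x])
          _ = F a x * F (t x) ω.out := by rw [hF, ht x]
      rw [← mul_assoc, ← Units.val_mul, key]
    · simp [w, hω]
  refine ⟨⟨f, hf⟩, funext fun ω => ?_⟩
  change f ω.1.out = v ω
  have hmk : (Quotient.mk'' ω.1.out : orbitRel.Quotient G X) = ω := ω.1.out_eq'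
  have hrep := ht ω.1.out
  simp only [f, w, hmk] at hrep ⊢
  rw [dif_pos ω.2, ω.2 _ (out_mem_orbit _) _ hrep, Units.val_one, one_mul]

theorem finrank_twistedInvariants [CommRing k] [IsDomain k] [Finite X] {F : G → X → kˣ}
    (hF : ∀ (a b : G) (x : X), F (a * b) x = F a (b • x) * F b x) :
    finrank k (twistedInvariants F) = Nat.card (untwistedOrbits F) := by
  have := Fintype.ofFinite (untwistedOrbits F)
  rw [(LinearEquiv.ofBijective _
      ⟨evalAtOrbitReps_injective, evalAtOrbitReps_surjective hF⟩).finrank_eq,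
    finrank_fintype_fun_eq_card, Nat.card_eq_fintype_card]

end TwistedInvariants

section ConjFactor

variable {G M : Type*} [Group G] [CommGroup M] {z : G → G → M}

/-- In a twisted group algebra, `e a * e g = conjFactor z a g • (e (a • g) * e a)`. -/
def conjFactor (z : G → G → M) (a : ConjAct G) (g : G) : M :=
  z (ofConjAct a) g / z (a • g) (ofConjAct a)

lemma conjFactor_mul
    (hz : ∀ g₁ g₂ g₃ : G, z g₂ g₃ * z g₁ (g₂ * g₃) = z (g₁ * g₂) g₃ * z g₁ g₂)
    (a b : ConjAct G) (g : G) :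
    conjFactor z (a * b) g = conjFactor z a (b • g) * conjFactor z b g := by
  obtain ⟨a, rfl⟩ := toConjAct.surjective a
  obtain ⟨b, rfl⟩ := toConjAct.surjective b
  simp only [conjFactor, ← map_mul, toConjAct_smul, ofConjAct_toConjAct,
    show a * b * g * (a * b)⁻¹ = a * (b * g * b⁻¹) * a⁻¹ by group]
  have h1 := hz a b g
  have h2 := hz (a * (b * g * b⁻¹) * a⁻¹) a b
  have h3 := hz a (b * g * b⁻¹) b
  rw [show a * (b * g * b⁻¹) * a⁻¹ * a = a * (b * g * b⁻¹) by group] at h2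
  rw [show b * g * b⁻¹ * b = b * g by group] at h3
  generalize b * g * b⁻¹ = g' at h2 h3 ⊢
  generalize a * g' * a⁻¹ = g'' at h2 ⊢
  rw [div_mul_div_comm, div_eq_div_iff_mul_eq_mul]
  apply mul_right_cancel (b := z a b * z a (b * g) * z (a * g') b)
  calc _ = (z (a * b) g * z a b) * (z g'' a * z (a * g') b) * (z g' b * z a (b * g)) := by
        ac_rfl
    _ = (z b g * z a (b * g)) * (z a b * z g'' (a * b)) * (z (a * g') b * z a g') := by
        rw [← h1, h2, h3, mul_comm (z g'' a)]
    _ = _ := by ac_rfl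

lemma forall_conjFactor_eq_one_iff {g : G} :
    (∀ a : ConjAct G, a • g = g → conjFactor z a g = 1) ↔
      ∀ h : G, h * g = g * h → z g h = z h g := by
  rw [toConjAct.surjective.forall]
  refine forall_congr' fun h => ?_
  rw [toConjAct_smul, mul_inv_eq_iff_eq_mul]
  refine imp_congr_right fun hc => ?_
  rw [conjFactor, toConjAct_smul, hc, mul_inv_cancel_right, ofConjAct_toConjAct, div_eq_one,
    eq_comm]

end ConjFactor

def ConjClasses.equivOrbitRelQuotient (G : Type*) [Group G] :
    ConjClasses G ≃ orbitRel.Quotient (ConjAct G) G :=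
  Quotient.congrRight fun g h => by rw [orbitRel_apply, mem_orbit_conjAct]; rfl

lemma card_untwistedOrbits_conjFactor {G M : Type*} [Group G] [CommGroup M] (z : G → G → M) :
    Nat.card (untwistedOrbits (conjFactor z)) = Nat.card {c : ConjClasses G //
      ∀ g ∈ ConjClasses.carrier c, ∀ h : G, h * g = g * h → z g h = z h g} := by
  refine Nat.card_congr (Equiv.subtypeEquiv (ConjClasses.equivOrbitRelQuotient G) fun c => ?_).symm
  obtain ⟨g, rfl⟩ := ConjClasses.mk_surjective c
  change _ ↔ ∀ y ∈ orbit (ConjAct G) g, ∀ a : ConjAct G, a • y = y → conjFactor z a y = 1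
  rw [orbit_eq_carrier_conjClasses]
  exact forall₂_congr fun y _ => forall_conjFactor_eq_one_iff.symm

lemma Module.Basis.mem_center_iff_commute {ι k A : Type*} [CommSemiring k] [Semiring A]
    [Algebra k A] (e : Basis ι k A) {x : A} :
    x ∈ Subalgebra.center k A ↔ ∀ i, Commute (e i) x := by
  refine ⟨fun hx i => Subalgebra.mem_center_iff.mp hx (e i),
    fun h => Subalgebra.mem_center_iff.mpr fun b => ?_⟩
  exact LinearMap.congr_fun (e.ext (f₁ := LinearMap.mulRight k x) (f₂ := LinearMap.mulLeft k x)
    fun i => (h i).eq) b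

section TwistedGroupAlgebra

variable {k G A : Type*} [Group G] [Fintype G] [CommRing k] [Ring A] [Algebra k A]
  {z : G → G → kˣ} {e : Basis G k A} (he : ∀ g g' : G, e g * e g' = (z g g' : k) • e (g * g'))
include he

lemma repr_basis_mul (x : A) (a g : G) : e.repr (e a * x) (a * g) = z a g * e.repr x g := by
  classical
  conv_lhs => rw [← e.sum_repr x]
  simp only [Finset.mul_sum, mul_smul_comm, he, smul_smul, map_sum, map_smul, e.repr_self,
    Finsupp.coe_finsetSum, Finset.sum_apply, Finsupp.smul_apply, Finsupp.single_apply,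
    mul_right_inj, smul_eq_mul, mul_one, mul_ite, mul_zero, Finset.sum_ite_eq', Finset.mem_univ,
    if_true]
  exact mul_comm _ _

lemma repr_mul_basis (x : A) (a g : G) : e.repr (x * e a) (g * a) = e.repr x g * z g a := by
  classical
  conv_lhs => rw [← e.sum_repr x]
  simp only [Finset.sum_mul, smul_mul_assoc, he, smul_smul, map_sum, map_smul, e.repr_self,
    Finsupp.coe_finsetSum, Finset.sum_apply, Finsupp.smul_apply, Finsupp.single_apply,
    mul_left_inj, smul_eq_mul, mul_one, mul_ite, mul_zero, Finset.sum_ite_eq', Finset.mem_univ,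
    if_true]

lemma mem_center_iff_equivFun_mem_twistedInvariants (x : A) :
    x ∈ Subalgebra.center k A ↔ e.equivFun x ∈ twistedInvariants (conjFactor z) := by
  rw [e.mem_center_iff_commute, mem_twistedInvariants, toConjAct.surjective.forall]
  refine forall_congr' fun a => ?_
  rw [commute_iff_eq, e.ext_elem_iff, (Equiv.mulLeft a).surjective.forall]
  refine forall_congr' fun g => ?_
  have hright := repr_mul_basis he x a (a * g * a⁻¹)
  rw [show a * g * a⁻¹ * a = a * g by group] at hright
  simp only [Equiv.coe_mulLeft, Basis.equivFun_apply, conjFactor, toConjAct_smul,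
    ofConjAct_toConjAct]
  rw [repr_basis_mul he, hright, div_eq_mul_inv, Units.val_mul, mul_right_comm,
    Units.eq_mul_inv_iff_mul_eq, eq_comm]

lemma finrank_center_eq_finrank_twistedInvariants :
    finrank k (Subalgebra.center k A) = finrank k (twistedInvariants (conjFactor z)) := by
  have hmap : (Subalgebra.toSubmodule (Subalgebra.center k A)).map (e.equivFun : A →ₗ[k] G → k) =
      twistedInvariants (conjFactor z) := by
    ext f
    rw [Submodule.map_equiv_eq_comap_symm, Submodule.mem_comap, Subalgebra.mem_toSubmodule,
      mem_center_iff_equivFun_mem_twistedInvariants he, LinearEquiv.coe_coe,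
      LinearEquiv.apply_symm_apply]
  rw [← hmap, LinearEquiv.finrank_map_eq, Subalgebra.finrank_toSubmodule]

end TwistedGroupAlgebra

theorem finrank_center_twisted_group_algebra_general
    {k G A : Type*} [Field k]
    [Group G] [Fintype G] [Ring A] [Algebra k A]
    (z : G → G → kˣ)
    (hz : ∀ g₁ g₂ g₃ : G, z g₂ g₃ * z g₁ (g₂ * g₃) = z (g₁ * g₂) g₃ * z g₁ g₂)
    (e : Module.Basis G k A)
    (he : ∀ g g' : G, e g * e g' = (z g g' : k) • e (g * g')) :
    Module.finrank k (Subalgebra.center k A)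
      = Nat.card {c : ConjClasses G //
          ∀ g ∈ ConjClasses.carrier c, ∀ h : G, h * g = g * h → z g h = z h g} := by
  rw [finrank_center_eq_finrank_twistedInvariants he, finrank_twistedInvariants (conjFactor_mul hz),
    card_untwistedOrbits_conjFactor]

/-- over an algebraically closed field of characteristic zero, the dimension
of the center of a twisted group algebra `k[G]_z` equals the number of `z`-regular
conjugacy classes of `G`. -/
theorem finrank_center_twisted_group_algebra
    {k G A : Type*} [Field k] [IsAlgClosed k] [CharZero k]
    [Group G] [Fintype G] [Ring A] [Algebra k A]
    (z : G → G → kˣ)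
    (hz : ∀ g₁ g₂ g₃ : G, z g₂ g₃ * z g₁ (g₂ * g₃) = z (g₁ * g₂) g₃ * z g₁ g₂)
    (hznorm : ∀ g : G, z g 1 = 1 ∧ z 1 g = 1)
    (e : Module.Basis G k A)
    (he : ∀ g g' : G, e g * e g' = (z g g' : k) • e (g * g')) :
    Module.finrank k (Subalgebra.center k A)
      = Nat.card {c : ConjClasses G //
          ∀ g ∈ ConjClasses.carrier c, ∀ h : G, h * g = g * h → z g h = z h g} :=
  finrank_center_twisted_group_algebra_general z hz e he
end

section
/- Let k be a field, G a finite group whose order is invertible in k (i.e. the characteristic of k is zero or does not divide |G|), and z : G × G → kˣ a normalized 2-cocycle with trivial action, i.e. z(g₂,g₃) · z(g₁,g₂g₃) = z(g₁g₂,g₃) · z(g₁,g₂) for all g₁,g₂,g₃ ∈ G and z(g,e) = z(e,g) = 1. Let A be an associative unital k-algebra equipped with a k-basis (e_g)_{g∈G} indexed by G such that e_g · e_{g'} = z(g,g') · e_{g g'} for all g, g' ∈ G (a twisted group algebra k[G]_z). Then A is a semisimple ring. -/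
/-!
Maschke's averaging argument needs only a family of units `u g` of `A`, indexed by a finite group
`G`, which spans `A` over `k` and is multiplicative up to scalars: `u g * u h ∈ kˣ • u (g * h)`.
Conjugating a `k`-linear retraction `π` by a unit is insensitive to scalar factors, so
`|G|⁻¹ • ∑ g, (u g)⁻¹ • π (u g • ·)` commutes with every `u h`, hence is `A`-linear. The basis
of a twisted group algebra is such a family once `e 1 = 1`, which the normalization gives.
-/

open scoped Ring

def IsProjectiveRepresentation (k : Type*) {G A : Type*} [CommRing k] [Mul G] [Ring A]
    [Algebra k A] (u : G → Aˣ) : Prop :=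
  ∀ g h, ∃ c : kˣ, ((u g * u h : Aˣ) : A) = (c : k) • (u (g * h) : A)

namespace LinearMap

variable {k A : Type*} [CommRing k] [Ring A] [Algebra k A]
  {V W : Type*} [AddCommGroup V] [Module A V] [Module k V] [IsScalarTower k A V]
  [AddCommGroup W] [Module A W] [Module k W] [IsScalarTower k A W]

theorem map_smul_of_span_eq_top {s : Set A} (hs : Submodule.span k s = ⊤) (f : W →ₗ[k] V)
    (hf : ∀ a ∈ s, ∀ w, f (a • w) = a • f w) (a : A) (w : W) : f (a • w) = a • f w := by
  induction (hs ▸ Submodule.mem_top : a ∈ Submodule.span k s) using Submodule.span_induction with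
  | mem a ha => exact hf a ha w
  | zero => simp
  | add a b _ _ ha hb => simp [add_smul, ha, hb]
  | smul c a _ ha => rw [smul_assoc, map_smul, ha, smul_assoc]

variable (π : W →ₗ[k] V)

def unitConj (a : Aˣ) : W →ₗ[k] V :=
  DistribSMul.toLinearMap k V (↑a⁻¹ : A) ∘ₗ π ∘ₗ DistribSMul.toLinearMap k W (a : A)

theorem unitConj_apply (a : Aˣ) (w : W) : π.unitConj a w = (↑a⁻¹ : A) • π ((a : A) • w) :=
  rfl

theorem unitConj_apply_smul (a b : Aˣ) (w : W) :
    π.unitConj a ((b : A) • w) = (b : A) • π.unitConj (a * b) w := by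
  simp [unitConj_apply, smul_smul]

theorem unitConj_eq_of_val_eq_smul {a b : Aˣ} (c : kˣ) (h : (a : A) = (c : k) • (b : A)) :
    π.unitConj a = π.unitConj b := by
  have h_inv : (↑a⁻¹ : A) = (↑c⁻¹ : k) • (↑b⁻¹ : A) :=
    Units.inv_eq_of_mul_eq_one_left (by simp [h, smul_smul])
  ext w
  rw [unitConj_apply, unitConj_apply, h, h_inv, smul_assoc (c : k), map_smul,
    smul_assoc (↑c⁻¹ : k), smul_comm (↑b⁻¹ : A) (c : k), smul_smul, Units.inv_mul, one_smul]

theorem unitConj_apply_of_leftInverse (i : V →ₗ[A] W) (hπ : ∀ v, π (i v) = v) (a : Aˣ) (v : V) :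
    π.unitConj a (i v) = v := by
  rw [unitConj_apply, ← i.map_smul, hπ, smul_smul, Units.inv_mul, one_smul]

variable {G : Type*} [Fintype G]

noncomputable def averagedConj (u : G → Aˣ) : W →ₗ[k] V :=
  (Fintype.card G : k)⁻¹ʳ • ∑ g, π.unitConj (u g)

theorem averagedConj_apply (u : G → Aˣ) (w : W) :
    π.averagedConj u w = (Fintype.card G : k)⁻¹ʳ • ∑ g, π.unitConj (u g) w := by
  simp [averagedConj]

theorem averagedConj_map_units_smul [Group G] {u : G → Aˣ}
    (hu : IsProjectiveRepresentation k u) (h : G) (w : W) :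
    π.averagedConj u ((u h : A) • w) = (u h : A) • π.averagedConj u w := by
  have hconj (g : G) : π.unitConj (u g * u h) = π.unitConj (u (g * h)) :=
    let ⟨c, hc⟩ := hu g h
    π.unitConj_eq_of_val_eq_smul c hc
  simp only [averagedConj_apply, unitConj_apply_smul, hconj, ← Finset.smul_sum]
  rw [smul_comm, Fintype.sum_equiv (Equiv.mulRight h) (fun g => π.unitConj (u (g * h)) w)
    (fun g => π.unitConj (u g) w) fun _ => rfl]

theorem averagedConj_map_smul [Group G] {u : G → Aˣ} (hu : IsProjectiveRepresentation k u)
    (hspan : Submodule.span k (Set.range fun g => (u g : A)) = ⊤) (a : A) (w : W) :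
    π.averagedConj u (a • w) = a • π.averagedConj u w :=
  map_smul_of_span_eq_top hspan _ (by rintro _ ⟨h, rfl⟩; exact π.averagedConj_map_units_smul hu h)
    a w

theorem averagedConj_apply_of_leftInverse (hcard : IsUnit (Fintype.card G : k)) (u : G → Aˣ)
    (i : V →ₗ[A] W) (hπ : ∀ v, π (i v) = v) (v : V) : π.averagedConj u (i v) = v := by
  simp only [averagedConj_apply, unitConj_apply_of_leftInverse π i hπ]
  rw [Finset.sum_const, Finset.card_univ, ← Nat.cast_smul_eq_nsmul k, smul_smul,
    Ring.inverse_mul_cancel _ hcard, one_smul]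

end LinearMap

namespace IsProjectiveRepresentation

variable {k A G : Type*} [Field k] [Ring A] [Algebra k A] [Group G] [Fintype G]
  {V W : Type*} [AddCommGroup V] [Module A V] [Module k V] [IsScalarTower k A V]
  [AddCommGroup W] [Module A W] [Module k W] [IsScalarTower k A W]
  {u : G → Aˣ}

theorem exists_leftInverse_of_injective (hu : IsProjectiveRepresentation k u)
    (hcard : IsUnit (Fintype.card G : k))
    (hspan : Submodule.span k (Set.range fun g => (u g : A)) = ⊤) (f : V →ₗ[A] W)
    (hf : LinearMap.ker f = ⊥) :
    ∃ g : W →ₗ[A] V, g ∘ₗ f = .id := by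
  obtain ⟨π, hπ⟩ := (f.restrictScalars k).exists_leftInverse_of_injective (by simpa using hf)
  refine ⟨{ π.averagedConj u with map_smul' := π.averagedConj_map_smul hu hspan },
    LinearMap.ext fun v => ?_⟩
  exact π.averagedConj_apply_of_leftInverse hcard u f (fun v => congr($hπ v)) v

theorem isSemisimpleModule (hu : IsProjectiveRepresentation k u)
    (hcard : IsUnit (Fintype.card G : k))
    (hspan : Submodule.span k (Set.range fun g => (u g : A)) = ⊤) : IsSemisimpleModule A V where
  exists_isCompl p := by
    obtain ⟨f, hf⟩ := hu.exists_leftInverse_of_injective hcard hspan p.subtype p.ker_subtype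
    exact ⟨LinearMap.ker f, LinearMap.isCompl_of_proj (DFunLike.congr_fun hf)⟩

end IsProjectiveRepresentation

namespace Module.Basis

variable {k G A : Type*} [CommRing k] [Ring A] [Algebra k A] {z : G → G → kˣ}

theorem apply_one_eq_one_of_mul_eq_smul [MulOneClass G] {e : Basis G k A}
    (he : ∀ g g', e g * e g' = (z g g' : k) • e (g * g')) (hz : ∀ g, z 1 g = 1) : e 1 = 1 := by
  have hmul : LinearMap.mulLeft k (e 1) = LinearMap.id :=
    e.ext fun g => by simp [he, hz]
  simpa using congr($hmul 1)

theorem isUnit_apply_of_mul_eq_smul [Group G] {e : Basis G k A}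
    (he : ∀ g g', e g * e g' = (z g g' : k) • e (g * g')) (he1 : e 1 = 1) (g : G) :
    IsUnit (e g) :=
  isUnit_iff_exists_and_exists.mpr
    ⟨⟨(z g g⁻¹)⁻¹ • e g⁻¹, by
        rw [mul_smul_comm, he, mul_inv_cancel, he1, ← Units.smul_def, inv_smul_smul]⟩,
      ⟨(z g⁻¹ g)⁻¹ • e g⁻¹, by
        rw [smul_mul_assoc, he, inv_mul_cancel, he1, ← Units.smul_def, inv_smul_smul]⟩⟩

end Module.Basis

theorem twisted_group_algebra_semisimple_general
    {k G A : Type*} [Field k] [Group G] [Fintype G] [Ring A] [Algebra k A]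
    (hcard : IsUnit (Fintype.card G : k))
    (z : G → G → kˣ)
    (hznorm : ∀ g : G, z g 1 = 1 ∧ z 1 g = 1)
    (e : Module.Basis G k A)
    (he : ∀ g g' : G, e g * e g' = (z g g' : k) • e (g * g')) :
    IsSemisimpleRing A := by
  have he1 : e 1 = 1 := e.apply_one_eq_one_of_mul_eq_smul he fun g => (hznorm g).2
  let u (g : G) : Aˣ := (e.isUnit_apply_of_mul_eq_smul he he1 g).unit
  have hu : IsProjectiveRepresentation k u := fun g h => ⟨z g h, he g h⟩
  exact hu.isSemisimpleModule hcard e.span_eq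

/-- Maschke for twisted group algebras: if the order of the finite group
`G` is invertible in `k`, any twisted group algebra `k[G]_z` is a semisimple ring. -/
theorem twisted_group_algebra_semisimple
    {k G A : Type*} [Field k] [Group G] [Fintype G] [Ring A] [Algebra k A]
    (hcard : IsUnit (Fintype.card G : k))
    (z : G → G → kˣ)
    (hz : ∀ g₁ g₂ g₃ : G, z g₂ g₃ * z g₁ (g₂ * g₃) = z (g₁ * g₂) g₃ * z g₁ g₂)
    (hznorm : ∀ g : G, z g 1 = 1 ∧ z 1 g = 1)
    (e : Module.Basis G k A)
    (he : ∀ g g' : G, e g * e g' = (z g g' : k) • e (g * g')) :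
    IsSemisimpleRing A :=
  twisted_group_algebra_semisimple_general hcard z hznorm e he
end

section
/- Let k be a field, G a group acting on the right on a set X, and suppose X is a G-torsor: the action is transitive and all stabilizers are trivial. Fix x₀ ∈ X and for each x ∈ X let ḡ(x) ∈ G denote the unique element with x₀ · ḡ(x) = x. Let z : G × G → (X → kˣ) be a normalized 2-cocycle of G with values in F(X,kˣ). Then the function t : X × G → kˣ defined by t(x,g) := z(ḡ(x), g)(x₀)⁻¹ satisfies t(x,e) = 1 and t(x, g g') = z(g,g')(x) · t(x·g, g') · t(x,g) for all x ∈ X and g, g' ∈ G. -/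
/-! Freeness makes the coordinate map equivariant, `ḡ(x·g) = ḡ(x)·g`. The identity for `t` is
then the inverse of the cocycle identity at `(ḡ(x), g, g')` evaluated at `x₀`, since
`x₀·ḡ(x) = x`. -/

theorem act_injective_of_free {G X : Type*} [Group G] (act : X → G → X)
    (hact_mul : ∀ x g g', act (act x g) g' = act x (g * g'))
    (hfree : ∀ (x : X) (g : G), act x g = x → g = 1) (x : X) :
    Function.Injective (act x) := by
  intro a b hab
  exact inv_mul_eq_one.mp <| hfree _ _ <| by rw [hact_mul, mul_inv_cancel_left, hab]

theorem torsor_coord_act {G X : Type*} [Group G] (act : X → G → X)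
    (hact_mul : ∀ x g g', act (act x g) g' = act x (g * g'))
    (hfree : ∀ (x : X) (g : G), act x g = x → g = 1)
    (x₀ : X) (gbar : X → G) (hgbar : ∀ x, act x₀ (gbar x) = x) (x : X) (g : G) :
    gbar (act x g) = gbar x * g :=
  act_injective_of_free act hact_mul hfree x₀ <| by rw [← hact_mul, hgbar, hgbar]

theorem cocycle_inv_eq {G X A : Type*} [Group G] [CommGroup A] (act : X → G → X)
    (z : G → G → X → A)
    (hz : ∀ (g₁ g₂ g₃ : G) (x' : X),
      z g₂ g₃ (act x' g₁) * z g₁ (g₂ * g₃) x' = z (g₁ * g₂) g₃ x' * z g₁ g₂ x')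
    (a g g' : G) (x : X) :
    (z a (g * g') x)⁻¹ = z g g' (act x a) * (z (a * g) g' x)⁻¹ * (z a g x)⁻¹ := by
  rw [mul_assoc, ← mul_inv, ← hz, mul_inv_rev, mul_inv_cancel_comm_assoc]

theorem torsor_projective_action_scalars_general
    {k G X : Type*} [Field k] [Group G]
    (act : X → G → X)
    (hact_mul : ∀ x g g', act (act x g) g' = act x (g * g'))
    (hfree : ∀ (x : X) (g : G), act x g = x → g = 1)
    (x₀ : X)
    (gbar : X → G)
    (hgbar : ∀ x, act x₀ (gbar x) = x)
    (z : G → G → X → kˣ)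
    (hz : ∀ (g₁ g₂ g₃ : G) (x' : X),
      z g₂ g₃ (act x' g₁) * z g₁ (g₂ * g₃) x' = z (g₁ * g₂) g₃ x' * z g₁ g₂ x')
    (hznorm : ∀ g : G, z g 1 = 1 ∧ z 1 g = 1)
    (t : X → G → kˣ)
    (ht : ∀ (x : X) (g : G), t x g = (z (gbar x) g x₀)⁻¹) :
    (∀ x : X, t x 1 = 1) ∧
    (∀ (x : X) (g g' : G), t x (g * g') = z g g' x * t (act x g) g' * t x g) := by
  refine ⟨fun x => by rw [ht, (hznorm _).1, Pi.one_apply, inv_one], fun x g g' => ?_⟩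
  rw [ht, ht, ht, torsor_coord_act act hact_mul hfree x₀ gbar hgbar, cocycle_inv_eq act z hz,
    hgbar]

/-- over a `G`-torsor `X`, for a normalized 2-cocycle `z` with values in
`F(X,kˣ)`, the scalars `t(x,g) = z(ḡ(x),g)(x₀)⁻¹` (where `ḡ(x)` is the unique element
with `x₀·ḡ(x) = x`) satisfy `t(x,e) = 1` and
`t(x,gg') = z(g,g')(x) · t(x·g,g') · t(x,g)`. -/
theorem torsor_projective_action_scalars
    {k G X : Type*} [Field k] [Group G]
    (act : X → G → X)
    (hact_one : ∀ x, act x 1 = x)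
    (hact_mul : ∀ x g g', act (act x g) g' = act x (g * g'))
    (htrans : ∀ x y : X, ∃ g, act x g = y)
    (hfree : ∀ (x : X) (g : G), act x g = x → g = 1)
    (x₀ : X)
    (gbar : X → G)
    (hgbar : ∀ x, act x₀ (gbar x) = x)
    (z : G → G → X → kˣ)
    (hz : ∀ (g₁ g₂ g₃ : G) (x' : X),
      z g₂ g₃ (act x' g₁) * z g₁ (g₂ * g₃) x' = z (g₁ * g₂) g₃ x' * z g₁ g₂ x')
    (hznorm : ∀ g : G, z g 1 = 1 ∧ z 1 g = 1)
    (t : X → G → kˣ)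
    (ht : ∀ (x : X) (g : G), t x g = (z (gbar x) g x₀)⁻¹) :
    (∀ x : X, t x 1 = 1) ∧
    (∀ (x : X) (g g' : G), t x (g * g') = z g g' x * t (act x g) g' * t x g) :=
  torsor_projective_action_scalars_general act hact_mul hfree x₀ gbar hgbar z hz hznorm t ht
end

section
/- Let k be a field and n, n' ≥ 1. Let 𝒱ⁿ denote the product category of n copies of the category of finite-dimensional k-vector spaces, and for i ∈ {1,…,n} let e_i denote the object of 𝒱ⁿ whose i-th component is k and whose other components are the zero vector space. Let H, H' : 𝒱ⁿ → 𝒱^{n'} be k-linear functors (additive functors whose maps on hom-spaces are k-linear). Then H and H' are naturally isomorphic if and only if they have the same matrix of ranks, i.e. if and only if for all i ∈ {1,…,n} and i' ∈ {1,…,n'} the dimension over k of the i'-th component of H(e_i) equals the dimension over k of the i'-th component of H'(e_i). -/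
open CategoryTheory

universe w v u

/-- Preadditive structure on a product of preadditive categories. -/
instance piPreadditive {I : Type w} {C : I → Type u} [∀ i, Category.{v} (C i)]
    [∀ i, Preadditive (C i)] : Preadditive (∀ i, C i) where
  homGroup X Y := inferInstanceAs (AddCommGroup (∀ i, X i ⟶ Y i))
  add_comp := by intros; funext i; exact Preadditive.add_comp _ _ _ _ _ _
  comp_add := by intros; funext i; exact Preadditive.comp_add _ _ _ _ _ _

/-- `k`-linear structure on a product of `k`-linear categories. -/
instance piLinear (k : Type*) [Semiring k] {I : Type w} {C : I → Type u}
    [∀ i, Category.{v} (C i)] [∀ i, Preadditive (C i)] [∀ i, Linear k (C i)] :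
    Linear k (∀ i, C i) where
  homModule X Y := inferInstanceAs (Module k (∀ i, X i ⟶ Y i))
  smul_comp := by intros; funext i; exact Linear.smul_comp _ _ _ _ _ _
  comp_smul := by intros; funext i; exact Linear.comp_smul _ _ _ _ _ _

/-- The basic object `e_i` of `𝒱ⁿ`: its `i`-th component is `k` and its other
components are the zero vector space. -/
noncomputable def basicObj (k : Type*) [Field k] (n : ℕ) (i : Fin n) :
    Fin n → FGModuleCat k :=
  fun j => if j = i then FGModuleCat.of k k else FGModuleCat.of k PUnit

/-!
A basis of each component of an object `X` of `𝒱ⁿ` exhibits `X` as a finite sum of basic objects: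
there are `π_p : X ⟶ e_{i_p}` and `ι_p : e_{i_p} ⟶ X` with `∑ π_p ≫ ι_p = 𝟙 X`. A family of
maps `φ_i : H e_i ⟶ H' e_i` that is natural with respect to morphisms between basic objects then
extends, for additive `H` and `H'`, to the natural transformation
`X ↦ ∑ H(π_p) ≫ φ_{i_p} ≫ H'(ι_p)`, compatibly with composition, so isomorphisms extend to
isomorphisms. Since `Hom(e_i, e_j)` is `k ∙ 𝟙` for `i = j` and zero otherwise, every family of
maps is natural in this sense for `k`-linear `H` and `H'`; when the ranks agree, componentwise
linear isomorphisms `H(e_i) ≅ H'(e_i)` give such a family.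
-/

namespace CategoryTheory

section Extension

variable {C D : Type*} [Category C] [Category D] {ι : Type*} {e : ι → C}

lemma NatTrans.naturality_induced {H H' : C ⥤ D}
    (φ : inducedFunctor e ⋙ H ⟶ inducedFunctor e ⋙ H') {i j : ι} (g : e i ⟶ e j) :
    H.map g ≫ φ.app j = φ.app i ≫ H'.map g :=
  φ.naturality (InducedCategory.homMk g)

variable [Preadditive C] [Preadditive D]

structure SumDecomposition (e : ι → C) (X : C) where
  J : Type
  [fintype : Fintype J]
  idx : J → ι
  proj : ∀ j, X ⟶ e (idx j)
  incl : ∀ j, e (idx j) ⟶ X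
  sum_proj_incl : ∑ j, proj j ≫ incl j = 𝟙 X

attribute [instance] SumDecomposition.fintype

namespace SumDecomposition

variable {H H' : C ⥤ D}

def app {X : C} (d : SumDecomposition e X) (φ : inducedFunctor e ⋙ H ⟶ inducedFunctor e ⋙ H') :
    H.obj X ⟶ H'.obj X :=
  ∑ j, H.map (d.proj j) ≫ φ.app (d.idx j) ≫ H'.map (d.incl j)

lemma app_comp_map [H.Additive] [H'.Additive] {X Y : C} (dX : SumDecomposition e X)
    (dY : SumDecomposition e Y) (φ : inducedFunctor e ⋙ H ⟶ inducedFunctor e ⋙ H')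
    (f : X ⟶ Y) : dX.app φ ≫ H'.map f = H.map f ≫ dY.app φ :=
  calc dX.app φ ≫ H'.map f
      = ∑ p, ∑ q, H.map (dX.proj p) ≫ φ.app (dX.idx p) ≫
          H'.map (dX.incl p ≫ f ≫ dY.proj q) ≫ H'.map (dY.incl q) := by
        simp only [app, Preadditive.sum_comp, Category.assoc, ← H'.map_comp,
          ← Preadditive.comp_sum, ← H'.map_sum, dY.sum_proj_incl, Category.comp_id]
    _ = ∑ q, ∑ p, H.map (dX.proj p ≫ dX.incl p ≫ f ≫ dY.proj q) ≫ φ.app (dY.idx q) ≫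
          H'.map (dY.incl q) := by
        rw [Finset.sum_comm]
        refine Finset.sum_congr rfl fun q _ => Finset.sum_congr rfl fun p _ => ?_
        rw [← Category.assoc (φ.app _), ← φ.naturality_induced]
        simp only [Functor.map_comp, Category.assoc]
    _ = ∑ q, H.map ((∑ p, dX.proj p ≫ dX.incl p) ≫ f ≫ dY.proj q) ≫ φ.app (dY.idx q) ≫
          H'.map (dY.incl q) := by
        simp only [Preadditive.sum_comp, H.map_sum, Category.assoc]
    _ = H.map f ≫ dY.app φ := by
        simp only [dX.sum_proj_incl, Category.id_comp, app, Preadditive.comp_sum, H.map_comp,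
          Category.assoc]

lemma app_eq [H'.Additive] {i : ι} (d : SumDecomposition e (e i))
    (φ : inducedFunctor e ⋙ H ⟶ inducedFunctor e ⋙ H') : d.app φ = φ.app i :=
  calc d.app φ = ∑ j, φ.app i ≫ H'.map (d.proj j ≫ d.incl j) :=
        Finset.sum_congr rfl fun j _ => by
          rw [← Category.assoc, φ.naturality_induced, Category.assoc, ← H'.map_comp]
    _ = φ.app i := by
        rw [← Preadditive.comp_sum, ← H'.map_sum, d.sum_proj_incl]
        simp

end SumDecomposition

variable {H H' H'' : C ⥤ D} [H.Additive] [H'.Additive] [H''.Additive]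

@[simps]
noncomputable def extendNatTrans (d : ∀ X, SumDecomposition e X)
    (φ : inducedFunctor e ⋙ H ⟶ inducedFunctor e ⋙ H') : H ⟶ H' where
  app X := (d X).app φ
  naturality _ _ f := ((d _).app_comp_map (d _) φ f).symm

lemma extendNatTrans_id (d : ∀ X, SumDecomposition e X) :
    extendNatTrans d (𝟙 (inducedFunctor e ⋙ H)) = 𝟙 H := by
  ext X
  simp only [extendNatTrans_app, SumDecomposition.app, NatTrans.id_app, Functor.comp_obj,
    inducedFunctor_obj, Category.id_comp, ← H.map_comp, ← H.map_sum, (d X).sum_proj_incl, H.map_id]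

lemma extendNatTrans_comp (d : ∀ X, SumDecomposition e X)
    (φ : inducedFunctor e ⋙ H ⟶ inducedFunctor e ⋙ H')
    (ψ : inducedFunctor e ⋙ H' ⟶ inducedFunctor e ⋙ H'') :
    extendNatTrans d (φ ≫ ψ) = extendNatTrans d φ ≫ extendNatTrans d ψ := by
  ext X
  change (d X).app (φ ≫ ψ) = (d X).app φ ≫ (extendNatTrans d ψ).app X
  rw [SumDecomposition.app, SumDecomposition.app, Preadditive.sum_comp]
  refine Finset.sum_congr rfl fun j _ => ?_
  rw [Category.assoc, Category.assoc, (extendNatTrans d ψ).naturality, NatTrans.comp_app,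
    Category.assoc]
  simp only [extendNatTrans_app, SumDecomposition.app_eq]

noncomputable def extendNatIso (d : ∀ X, SumDecomposition e X)
    (φ : inducedFunctor e ⋙ H ≅ inducedFunctor e ⋙ H') : H ≅ H' where
  hom := extendNatTrans d φ.hom
  inv := extendNatTrans d φ.inv
  hom_inv_id := by rw [← extendNatTrans_comp, φ.hom_inv_id, extendNatTrans_id]
  inv_hom_id := by rw [← extendNatTrans_comp, φ.inv_hom_id, extendNatTrans_id]

end Extension

section ScalarHoms

variable {k : Type*} [Semiring k] {C D : Type*} [Category C] [Category D] [Preadditive C]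
  [Preadditive D] [Linear k C] [Linear k D] {ι : Type*} {e : ι → C}

lemma map_comp_eq_comp_map_of_eq_smul_id {H H' : C ⥤ D} [H.Additive] [H'.Additive]
    [H.Linear k] [H'.Linear k]
    (hend : ∀ i (g : e i ⟶ e i), ∃ c : k, g = c • 𝟙 _)
    (horth : ∀ i j, i ≠ j → ∀ g : e i ⟶ e j, g = 0)
    (φ : ∀ i, H.obj (e i) ⟶ H'.obj (e i)) {i j : ι} (g : e i ⟶ e j) :
    H.map g ≫ φ j = φ i ≫ H'.map g := by
  by_cases h : i = j
  · subst h
    obtain ⟨c, rfl⟩ := hend i g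
    simp [Functor.map_smul]
  · simp [horth i j h g]

noncomputable def inducedNatIsoOfEqSmulId {H H' : C ⥤ D} [H.Additive] [H'.Additive]
    [H.Linear k] [H'.Linear k]
    (hend : ∀ i (g : e i ⟶ e i), ∃ c : k, g = c • 𝟙 _)
    (horth : ∀ i j, i ≠ j → ∀ g : e i ⟶ e j, g = 0)
    (φ : ∀ i, H.obj (e i) ≅ H'.obj (e i)) :
    inducedFunctor e ⋙ H ≅ inducedFunctor e ⋙ H' :=
  NatIso.ofComponents φ fun g =>
    map_comp_eq_comp_map_of_eq_smul_id hend horth (fun i => (φ i).hom) g.hom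

end ScalarHoms

section PiSingle

variable {I : Type*} [DecidableEq I] {C : I → Type*} [∀ i, Category (C i)]
  [∀ i, Limits.HasZeroMorphisms (C i)]

lemma Pi.single_comp_single {X Y Z : ∀ i, C i} (i : I) (f : X i ⟶ Y i) (g : Y i ⟶ Z i) :
    ((Pi.single i f : X ⟶ Y) ≫ (Pi.single i g : Y ⟶ Z)) =
      (show X ⟶ Z from Pi.single i (f ≫ g)) := by
  funext j
  by_cases h : j = i
  · subst h; simp
  · simp [Pi.single_eq_of_ne h]

end PiSingle

end CategoryTheory

namespace FGModuleCat

variable {R : Type*} [Ring R]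

lemma hom_hom_sum {V W : FGModuleCat R} {ι : Type*} (s : Finset ι) (f : ι → (V ⟶ W)) :
    (∑ i ∈ s, f i).hom.hom = ∑ i ∈ s, (f i).hom.hom := by
  rw [← ModuleCat.hom_sum]
  exact congrArg ModuleCat.Hom.hom
    (map_sum (InducedCategory.homAddEquiv (F := fun V : FGModuleCat R => V.obj)) f s)

lemma sum_ofHom_coord_comp_ofHom_toSpanSingleton {V L : FGModuleCat R} (ε : L ≃ₗ[R] R)
    {ι : Type*} [Fintype ι] (b : Module.Basis ι R V) :
    ∑ j, (ConcreteCategory.ofHom (ε.symm.toLinearMap ∘ₗ b.coord j) : V ⟶ L) ≫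
      ConcreteCategory.ofHom (LinearMap.toSpanSingleton R V (b j) ∘ₗ ε.toLinearMap) = 𝟙 V := by
  ext x
  rw [hom_hom_sum, LinearMap.sum_apply]
  refine Eq.trans (Finset.sum_congr rfl fun j _ => ?_) (b.sum_repr x)
  change ε (ε.symm (b.coord j x)) • b j = _
  simp

end FGModuleCat

section BasicObj

variable {k : Type*} [Field k] {n : ℕ}

lemma finrank_basicObj_self (i : Fin n) : Module.finrank k (basicObj k n i i) = 1 := by
  rw [basicObj, if_pos rfl]
  exact Module.finrank_self k

lemma subsingleton_basicObj_of_ne {i j : Fin n} (h : j ≠ i) : Subsingleton (basicObj k n i j) := by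
  rw [basicObj, if_neg h]
  exact inferInstanceAs (Subsingleton PUnit)

lemma basicObj_endo_eq_smul_id (i : Fin n) (g : basicObj k n i ⟶ basicObj k n i) :
    ∃ c : k, g = c • 𝟙 _ := by
  obtain ⟨c, hc, -⟩ :=
    (g i).hom.hom.existsUnique_eq_smul_id_of_finrank_eq_one (finrank_basicObj_self i)
  refine ⟨c, funext fun j => FGModuleCat.hom_ext ?_⟩
  by_cases h : j = i
  · subst h; exact hc
  · have := subsingleton_basicObj_of_ne (k := k) h
    exact Subsingleton.elim _ _

lemma basicObj_hom_eq_zero {i j : Fin n} (h : i ≠ j) (g : basicObj k n i ⟶ basicObj k n j) :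
    g = 0 := by
  funext m
  refine FGModuleCat.hom_ext (LinearMap.ext fun x => ?_)
  by_cases hm : m = i
  · subst hm
    have := subsingleton_basicObj_of_ne (k := k) h
    exact Subsingleton.elim _ _
  · have := subsingleton_basicObj_of_ne (k := k) hm
    rw [Subsingleton.elim x 0, map_zero, map_zero]

noncomputable def basicObjSelfEquiv (i : Fin n) : basicObj k n i i ≃ₗ[k] k :=
  LinearEquiv.ofFinrankEq _ _ (by rw [finrank_basicObj_self, Module.finrank_self])

noncomputable def basicObjDecomposition (X : Fin n → FGModuleCat k) :
    SumDecomposition (basicObj k n) X where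
  J := Σ i, Fin (Module.finrank k (X i))
  idx p := p.1
  proj p := Pi.single p.1 <| ConcreteCategory.ofHom <|
    (basicObjSelfEquiv p.1).symm.toLinearMap ∘ₗ (Module.finBasis k (X p.1)).coord p.2
  incl p := Pi.single p.1 <| ConcreteCategory.ofHom <|
    LinearMap.toSpanSingleton k _ (Module.finBasis k (X p.1) p.2) ∘ₗ
      (basicObjSelfEquiv p.1).toLinearMap
  sum_proj_incl := by
    simp only [Pi.single_comp_single]
    rw [Fintype.sum_sigma]
    refine Eq.trans (Finset.sum_congr rfl fun i _ => ?_) (Finset.univ_sum_single fun i => 𝟙 (X i))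
    rw [← FGModuleCat.sum_ofHom_coord_comp_ofHom_toSpanSingleton (basicObjSelfEquiv i)
      (Module.finBasis k (X i))]
    exact (map_sum (AddMonoidHom.single (fun i => X i ⟶ X i) i) _ _).symm

end BasicObj

theorem linear_functor_iso_iff_same_matrix_of_ranks_general
    {k : Type*} [Field k] (n n' : ℕ)
    (H H' : (Fin n → FGModuleCat k) ⥤ (Fin n' → FGModuleCat k))
    [H.Additive] [H'.Additive] [H.Linear k] [H'.Linear k] :
    Nonempty (H ≅ H') ↔
      ∀ (i : Fin n) (i' : Fin n'),
        Module.finrank k (H.obj (basicObj k n i) i')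
          = Module.finrank k (H'.obj (basicObj k n i) i') := by
  constructor
  · rintro ⟨η⟩ i i'
    exact (FGModuleCat.isoToLinearEquiv (Pi.isoApp (η.app (basicObj k n i)) i')).finrank_eq
  · intro hrank
    let φ (i : Fin n) : H.obj (basicObj k n i) ≅ H'.obj (basicObj k n i) :=
      Pi.isoMk fun i' => (LinearEquiv.ofFinrankEq _ _ (hrank i i')).toFGModuleCatIso
    exact ⟨extendNatIso basicObjDecomposition
      (inducedNatIsoOfEqSmulId basicObj_endo_eq_smul_id
        (fun _ _ => basicObj_hom_eq_zero) φ)⟩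

/-- two `k`-linear functors `𝒱ⁿ → 𝒱^{n'}` are naturally isomorphic iff
they have the same matrix of ranks, i.e. iff for all `i`, `i'` the `i'`-th component of
`H(e_i)` and of `H'(e_i)` have equal dimension over `k`. -/
theorem linear_functor_iso_iff_same_matrix_of_ranks
    {k : Type*} [Field k] (n n' : ℕ) (hn : 1 ≤ n) (hn' : 1 ≤ n')
    (H H' : (Fin n → FGModuleCat k) ⥤ (Fin n' → FGModuleCat k))
    [H.Additive] [H'.Additive] [H.Linear k] [H'.Linear k] :
    Nonempty (H ≅ H') ↔
      ∀ (i : Fin n) (i' : Fin n'),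
        Module.finrank k (H.obj (basicObj k n i) i')
          = Module.finrank k (H'.obj (basicObj k n i) i') :=
  linear_functor_iso_iff_same_matrix_of_ranks_general n n' H H'
end
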